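/- Define g(x) = H^{s_β}(E_β(x)) for x∈ℝ (so g(x)=0 for x outside I_β). Then g satisfies the self-similarity functional equation g(x) = (β/2)(g(T₀(x)) + g(T₁(x))) for every x∈I_β. -/

import Mathlib

open MeasureTheory Filter Topology
open scoped ENNReal Classical

noncomputable section

/-- The symbolic space `{0,1}^ℕ`. -/
abbrev Sig : Type := ℕ → Bool

/-- The metric `d(a,b) = 2^{-sup{n : a₁⋯a_n = b₁⋯b_n}}` on `Sig`. -/
noncomputable instance : MetricSpace Sig := PiNat.metricSpace

instance (priority := 2000) : MeasurableSpace Sig := borel Sig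

instance : BorelSpace Sig := ⟨rfl⟩

/-- The cylinder set `[a₁⋯a_n]` determined by a word `w = a₁⋯a_n`. -/
def cyl (w : List Bool) : Set Sig := {b | ∀ i : Fin w.length, b i.1 = w.get i}

/-- `π_β(a) = Σ_{i=1}^∞ a_i β^{-i}`. -/
def piBeta (β : ℝ) (a : Sig) : ℝ := ∑' i : ℕ, (if a i then (1 : ℝ) else 0) * (β ^ (i + 1))⁻¹

/-- `I_β = [0, 1/(β-1)]`. -/
def Ibeta (β : ℝ) : Set ℝ := Set.Icc 0 (β - 1)⁻¹

/-- The set `E_β(x) = π_β⁻¹(x)` of β-expansions of `x`. -/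
def Ebeta (β : ℝ) (x : ℝ) : Set Sig := piBeta β ⁻¹' {x}

/-- `T_i(x) = βx - i` for `i = 0,1`. -/
def Tmap (β : ℝ) (b : Bool) (x : ℝ) : ℝ := β * x - (if b then 1 else 0)

/-- `T_{a₁⋯a_n} = T_{a_n} ∘ ⋯ ∘ T_{a₁}`. -/
def Tword (β : ℝ) (w : List Bool) (x : ℝ) : ℝ := w.foldl (fun y b => Tmap β b y) x

/-- `s_β = log(2/β)/log 2`. -/
def sBeta (β : ℝ) : ℝ := Real.log (2 / β) / Real.log 2

/-- `m` is the uniform `(1/2,1/2)` Bernoulli measure: every cylinder of depth `n`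
has measure `2^{-n}`. -/
def bernoulliCylProp (m : Measure Sig) : Prop :=
  ∀ w : List Bool, m (cyl w) = (2 : ℝ≥0∞)⁻¹ ^ w.length

/-!
Splitting by the first digit, `E_β(x)` is the disjoint union of `0 E_β(T₀ x)` and `1 E_β(T₁ x)`,
because `π_β(b a) = (b + π_β(a)) / β`. The two pieces lie in complementary clopen cylinders, so
`H^s` adds over them, and prepending a digit is a similarity of ratio `1/2` of `Σ`, which scales
`H^s` by `2^{-s}`; for `s = s_β` this factor is `β/2`.
-/

section

variable {X Y F : Type*} [EMetricSpace X] [EMetricSpace Y] [MeasurableSpace X] [BorelSpace X]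
  [MeasurableSpace Y] [BorelSpace Y] [FunLike F X Y] [DilationClass F X Y]

theorem Dilation.hausdorffMeasure_image (f : F) {d : ℝ} (hd : 0 ≤ d) (s : Set X) :
    μH[d] (f '' s) = (Dilation.ratio f : ℝ≥0∞) ^ d * μH[d] s := by
  have hr₀ : (Dilation.ratio f : ℝ≥0∞) ^ d ≠ 0 := by simp [Dilation.ratio_ne_zero f]
  have hr₁ : (Dilation.ratio f : ℝ≥0∞) ^ d ≠ ⊤ := by simp [hd]
  refine le_antisymm ((Dilation.lipschitz f).hausdorffMeasure_image_le hd s) ?_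
  rw [ENNReal.mul_le_iff_le_inv hr₀ hr₁, ← ENNReal.inv_rpow,
    ← ENNReal.coe_inv (Dilation.ratio_ne_zero f)]
  exact (Dilation.antilipschitz f).le_hausdorffMeasure_image hd s

end

namespace Sig

def cons (b : Bool) (a : Sig) : Sig
  | 0 => b
  | n + 1 => a n

@[simp] theorem cons_zero (b : Bool) (a : Sig) : cons b a 0 = b := rfl

@[simp] theorem cons_succ (b : Bool) (a : Sig) (n : ℕ) : cons b a (n + 1) = a n := rfl

theorem cons_head_tail (c : Sig) : cons (c 0) (fun n => c (n + 1)) = c := by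
  funext n; cases n <;> rfl

theorem cons_injective (b : Bool) : Function.Injective (cons b) :=
  fun _ _ e => funext fun n => congrFun e (n + 1)

theorem firstDiff_cons_cons (b : Bool) {a a' : Sig} (h : a ≠ a') :
    PiNat.firstDiff (cons b a) (cons b a') = PiNat.firstDiff a a' + 1 := by
  have h' := (cons_injective b).ne h
  rw [PiNat.firstDiff_def, PiNat.firstDiff_def, dif_pos h, dif_pos h']
  convert Nat.find_comp_succ (Function.ne_iff.1 h') (Function.ne_iff.1 h) (by simp) using 3
  rfl

theorem dist_cons_cons (b : Bool) (a a' : Sig) :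
    dist (cons b a) (cons b a') = 2⁻¹ * dist a a' := by
  rcases eq_or_ne a a' with rfl | h
  · simp
  rw [PiNat.dist_eq_of_ne h, PiNat.dist_eq_of_ne ((cons_injective b).ne h),
    firstDiff_cons_cons b h, pow_succ']
  norm_num

def consDilation (b : Bool) : Sig →ᵈ Sig :=
  Dilation.mkOfDistEq (cons b) ⟨2⁻¹, by norm_num, fun a a' => by simpa using dist_cons_cons b a a'⟩

theorem ratio_consDilation (b : Bool) : Dilation.ratio (consDilation b) = 2⁻¹ := by
  refine (Dilation.ratio_unique_of_dist_ne_zero (x := fun _ => false) (y := fun _ => true)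
    (dist_ne_zero.2 fun e => by simpa using congrFun e 0) ?_).symm
  exact_mod_cast dist_cons_cons b _ _

theorem hausdorffMeasure_cons_image {s : ℝ} (hs : 0 ≤ s) (b : Bool) (A : Set Sig) :
    μH[s] (cons b '' A) = 2⁻¹ ^ s * μH[s] A := by
  have := Dilation.hausdorffMeasure_image (consDilation b) hs A
  rwa [ratio_consDilation, ENNReal.coe_inv two_ne_zero, ENNReal.coe_ofNat] at this

theorem measurableSet_head_eq (b : Bool) : MeasurableSet {c : Sig | c 0 = b} :=
  measurableSet_eq_fun (continuous_apply 0).measurable measurable_const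

end Sig

section

variable {β : ℝ}

theorem summable_piBeta (hβ : 1 < β) (a : Sig) :
    Summable fun i : ℕ => (if a i then (1 : ℝ) else 0) * (β ^ (i + 1))⁻¹ := by
  have hgeom : Summable fun i : ℕ => (β ^ (i + 1))⁻¹ := by
    simpa only [← inv_pow] using (summable_nat_add_iff 1).2
      (summable_geometric_of_lt_one (by positivity) (inv_lt_one_of_one_lt₀ hβ))
  refine hgeom.of_nonneg_of_le (fun i => by positivity) fun i => ?_
  split_ifs <;> simp [le_of_lt, hβ.trans' zero_lt_one]

theorem Tmap_injective (hβ : β ≠ 0) (b : Bool) : Function.Injective (Tmap β b) :=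
  fun _ _ h => by simpa [Tmap, hβ] using h

theorem piBeta_cons (hβ : 1 < β) (b : Bool) (a : Sig) :
    piBeta β (Sig.cons b a) = ((if b then 1 else 0) + piBeta β a) / β := by
  have htail : ∀ n : ℕ, (if Sig.cons b a (n + 1) then (1 : ℝ) else 0) * (β ^ (n + 1 + 1))⁻¹
      = (if a n then (1 : ℝ) else 0) * (β ^ (n + 1))⁻¹ / β := fun n => by
    rw [Sig.cons_succ, pow_succ _ (n + 1), mul_inv, ← div_eq_mul_inv, mul_div_assoc]
  rw [piBeta, (summable_piBeta hβ _).tsum_eq_zero_add, tsum_congr htail, tsum_div_const,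
    Sig.cons_zero, zero_add, pow_one, ← piBeta]
  ring

theorem Tmap_piBeta_cons (hβ : 1 < β) (b : Bool) (a : Sig) :
    Tmap β b (piBeta β (Sig.cons b a)) = piBeta β a := by
  rw [Tmap, piBeta_cons hβ, mul_div_cancel₀ _ (by positivity)]
  ring

theorem cons_image_Ebeta_Tmap (hβ : 1 < β) (b : Bool) (x : ℝ) :
    Sig.cons b '' Ebeta β (Tmap β b x) = Ebeta β x ∩ {c | c 0 = b} := by
  ext c
  simp only [Ebeta, Set.mem_image, Set.mem_preimage, Set.mem_singleton_iff, Set.mem_inter_iff,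
    Set.mem_ofPred_eq]
  constructor
  · rintro ⟨a, ha, rfl⟩
    rw [← Tmap_piBeta_cons hβ b a] at ha
    exact ⟨Tmap_injective (by positivity) b ha, rfl⟩
  · rintro ⟨hc, rfl⟩
    refine ⟨fun n => c (n + 1), ?_, Sig.cons_head_tail c⟩
    rw [← hc, ← Tmap_piBeta_cons hβ (c 0), Sig.cons_head_tail]

theorem sBeta_nonneg (hβ₀ : 0 < β) (hβ₂ : β ≤ 2) : 0 ≤ sBeta β := by
  rw [sBeta, Real.log_div_log]
  exact Real.logb_nonneg one_lt_two ((one_le_div hβ₀).2 hβ₂)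

theorem inv_two_rpow_sBeta (hβ : 0 < β) : (2⁻¹ : ℝ≥0∞) ^ sBeta β = ENNReal.ofReal (β / 2) := by
  rw [← ENNReal.ofReal_ofNat, ← ENNReal.ofReal_inv_of_pos two_pos,
    ENNReal.ofReal_rpow_of_pos (by norm_num), sBeta, Real.log_div_log,
    Real.inv_rpow zero_le_two, Real.rpow_logb two_pos (by norm_num) (by positivity), inv_div]

end

/-- The function `g(x) = H^{s_β}(E_β(x))` satisfies the self-similarity
equation `g(x) = (β/2)(g(T₀(x)) + g(T₁(x)))` for every `x ∈ I_β`. -/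
theorem stmt4 (β : ℝ) (hβ : β ∈ Set.Ioo (1 : ℝ) 2) :
    ∀ x ∈ Ibeta β,
      μH[sBeta β] (Ebeta β x)
        = ENNReal.ofReal (β / 2) *
            (μH[sBeta β] (Ebeta β (Tmap β false x))
              + μH[sBeta β] (Ebeta β (Tmap β true x))) := by
  obtain ⟨hβ₁, hβ₂⟩ := hβ
  intro x _
  have hs : 0 ≤ sBeta β := sBeta_nonneg (by linarith) hβ₂.le
  have hdiff : Ebeta β x \ {c | c 0 = false} = Ebeta β x ∩ {c | c 0 = true} := by
    ext c; simp
  rw [← measure_inter_add_sdiff (Ebeta β x) (Sig.measurableSet_head_eq false), hdiff,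
    ← cons_image_Ebeta_Tmap hβ₁, ← cons_image_Ebeta_Tmap hβ₁,
    Sig.hausdorffMeasure_cons_image hs, Sig.hausdorffMeasure_cons_image hs,
    inv_two_rpow_sBeta (by linarith), mul_add]
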